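/- For every integer n ≥ 2, the null variance of the fourth power of Kendall's tau satisfies M_{τ,8}(n) − M_{τ,4}(n)² = 256(n−2) Q_{τ,4}(n) / (9568125 n⁷ (n−1)⁷), where Q_{τ,4}(n) = 140000n⁹ + 617400n⁸ − 160764n⁷ − 4827762n⁶ − 7764663n⁵ + 3028185n⁴ + 23170684n³ + 31403277n² + 20222343n + 5273100. -/

import Mathlib

/-!
Inserting the value `0` at position `k` into a permutation of `Fin n` creates exactly `k` new
inversions, and every permutation of `Fin (n + 1)` arises this way exactly once. So the centred
inversion number on `S (n + 1)` is the one on `S n` plus an independent centred uniform variable on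
`{0, …, n}`, and its central moments `μ r` obey a binomial recursion in which the odd moments of the
symmetric uniform variable drop out. Solving it gives `μ 2`, `μ 4`, `μ 6`, `μ 8` as polynomials in
`n`; since `τ = -4 (inv - n (n - 1) / 4) / (n (n - 1))`, the variance of `τ ^ 4` is
`(4 / (n (n - 1))) ^ 8 * (μ 8 - μ 4 ^ 2)`.
-/

open Finset Equiv

namespace Equiv.Perm

def numInversions {n : ℕ} (π : Perm (Fin n)) : ℕ :=
  #{ij : Fin n × Fin n | ij.1 < ij.2 ∧ π ij.2 < π ij.1}

noncomputable def insertZero {n : ℕ} (k : Fin (n + 1)) (σ : Perm (Fin n)) : Perm (Fin (n + 1)) :=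
  decomposeFin.symm (0, σ) * k.cycleRange

variable {n : ℕ} (k : Fin (n + 1)) (σ : Perm (Fin n))

@[simp]
lemma insertZero_apply_self : insertZero k σ k = 0 := by
  simp [insertZero, Fin.cycleRange_self, decomposeFin_symm_apply_zero]

@[simp]
lemma insertZero_apply_succAbove (t : Fin n) : insertZero k σ (k.succAbove t) = (σ t).succ := by
  rcases lt_or_ge t.castSucc k with h | h
  · rw [insertZero, mul_apply, Fin.succAbove_of_castSucc_lt _ _ h, Fin.cycleRange_of_lt h,
      Fin.coeSucc_eq_succ, decomposeFin_symm_apply_succ]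
    simp
  · rw [insertZero, mul_apply, Fin.succAbove_of_le_castSucc _ _ h,
      Fin.cycleRange_of_gt (Fin.le_castSucc_iff.mp h), decomposeFin_symm_apply_succ]
    simp

lemma insertZero_apply_ne_zero {i : Fin (n + 1)} (hi : i ≠ k) : insertZero k σ i ≠ 0 := by
  obtain ⟨t, rfl⟩ := Fin.exists_succAbove_eq hi
  simp

lemma card_inversions_insertZero_snd_eq :
    #{ij : Fin (n + 1) × Fin (n + 1) |
      (ij.1 < ij.2 ∧ insertZero k σ ij.2 < insertZero k σ ij.1) ∧ ij.2 = k} = k := by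
  symm
  rw [← Fin.card_Iio k, ← card_map ⟨fun i => (i, k), fun _ _ h => congrArg Prod.fst h⟩]
  refine congrArg Finset.card ?_
  ext ⟨i, j⟩
  simp only [mem_filter, mem_univ, true_and, mem_map, mem_Iio]
  constructor
  · rintro ⟨i, hik, rfl, rfl⟩
    simpa [Fin.pos_iff_ne_zero] using ⟨hik, insertZero_apply_ne_zero k σ hik.ne⟩
  · rintro ⟨⟨hij, -⟩, rfl⟩
    exact ⟨i, hij, rfl⟩

lemma card_inversions_insertZero_snd_ne :
    #{ij : Fin (n + 1) × Fin (n + 1) |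
      (ij.1 < ij.2 ∧ insertZero k σ ij.2 < insertZero k σ ij.1) ∧ ¬ij.2 = k} =
      σ.numInversions := by
  symm
  rw [numInversions, ← card_map ⟨Prod.map k.succAbove k.succAbove,
    Fin.succAbove_right_injective.prodMap Fin.succAbove_right_injective⟩]
  refine congrArg Finset.card ?_
  ext ⟨i, j⟩
  simp only [mem_filter, mem_univ, true_and, mem_map, Function.Embedding.coeFn_mk, Prod.exists,
    Prod.map, Prod.mk.injEq]
  constructor
  · rintro ⟨s, t, ⟨hst, hσ⟩, rfl, rfl⟩
    exact ⟨⟨Fin.succAbove_lt_succAbove_iff.mpr hst, by simpa using hσ⟩, Fin.succAbove_ne k t⟩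
  · rintro ⟨⟨hij, hπ⟩, hj⟩
    have hi : i ≠ k := by
      rintro rfl
      simp at hπ
    obtain ⟨s, rfl⟩ := Fin.exists_succAbove_eq hi
    obtain ⟨t, rfl⟩ := Fin.exists_succAbove_eq hj
    refine ⟨s, t, ⟨Fin.succAbove_lt_succAbove_iff.mp hij, ?_⟩, rfl, rfl⟩
    simpa using hπ

lemma numInversions_insertZero : (insertZero k σ).numInversions = k + σ.numInversions := by
  rw [numInversions, ← card_filter_add_card_filter_not (p := fun ij => ij.2 = k), filter_filter,
    filter_filter, card_inversions_insertZero_snd_eq, card_inversions_insertZero_snd_ne]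

variable (n) in
lemma bijective_insertZero :
    Function.Bijective fun p : Fin (n + 1) × Perm (Fin n) ↦ insertZero p.1 p.2 := by
  rw [Fintype.bijective_iff_injective_and_card]
  refine ⟨?_, by simp [Fintype.card_perm, Nat.factorial_succ]⟩
  rintro ⟨k, σ⟩ ⟨k', σ'⟩ h
  dsimp only at h
  obtain rfl : k = k' := (insertZero k σ).injective <| by
    rw [insertZero_apply_self, h, insertZero_apply_self]
  have := decomposeFin.symm.injective (mul_right_cancel h)
  simp_all

lemma sum_perm_succ_numInversions {M : Type*} [AddCommMonoid M] (f : ℕ → M) :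
    ∑ π : Perm (Fin (n + 1)), f π.numInversions =
      ∑ k : Fin (n + 1), ∑ σ : Perm (Fin n), f (k + σ.numInversions) := by
  rw [← (bijective_insertZero n).sum_comp, Fintype.sum_prod_type]
  simp only [numInversions_insertZero]

end Equiv.Perm

open Perm

noncomputable def invCentralMoment (r n : ℕ) : ℝ :=
  (∑ π : Perm (Fin n), ((π.numInversions : ℝ) - n * (n - 1) / 4) ^ r) / n.factorial

noncomputable def uniformCentralMoment (s n : ℕ) : ℝ :=
  (∑ k ∈ range (n + 1), ((k : ℝ) - n / 2) ^ s) / (n + 1)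

lemma uniformCentralMoment_of_odd {s : ℕ} (hs : Odd s) (n : ℕ) :
    uniformCentralMoment s n = 0 := by
  have hreflect := sum_range_reflect (fun k : ℕ ↦ ((k : ℝ) - n / 2) ^ s) (n + 1)
  have hneg : ∑ j ∈ range (n + 1), (((n + 1 - 1 - j : ℕ) : ℝ) - n / 2) ^ s =
      -∑ k ∈ range (n + 1), ((k : ℝ) - n / 2) ^ s := by
    rw [← sum_neg_distrib]
    refine sum_congr rfl fun j hj ↦ ?_
    rw [Nat.add_sub_cancel, Nat.cast_sub (by simpa [Nat.lt_succ_iff] using hj), ← hs.neg_pow]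
    ring_nf
  rw [uniformCentralMoment, div_eq_zero_iff]
  left
  linarith

lemma uniformCentralMoment_zero_left (n : ℕ) : uniformCentralMoment 0 n = 1 := by
  simp [uniformCentralMoment, Nat.cast_add_one_ne_zero]

/-- Going from `n` to `n + 2` adds the two end points `±(n + 2) / 2` to the centred range. -/
lemma uniformCentralMoment_eq_of_recurrence {s : ℕ} (hs : Even s) {q : ℝ → ℝ}
    (h0 : uniformCentralMoment s 0 = q 0) (h1 : uniformCentralMoment s 1 = q 1)
    (hq : ∀ x : ℝ, (x + 3) * q (x + 2) = (x + 1) * q x + 2 * ((x + 2) / 2) ^ s) (n : ℕ) :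
    uniformCentralMoment s n = q n := by
  induction n using Nat.twoStepInduction with
  | zero => exact_mod_cast h0
  | one => exact_mod_cast h1
  | more n ih _ =>
    have hpos : ∀ m : ℕ, (m : ℝ) + 1 ≠ 0 := fun m ↦ by positivity
    have hsum : ∑ k ∈ range (n + 2 + 1), ((k : ℝ) - (n + 2 : ℕ) / 2) ^ s =
        ∑ k ∈ range (n + 1), ((k : ℝ) - n / 2) ^ s + 2 * (((n : ℝ) + 2) / 2) ^ s := by
      rw [sum_range_succ, sum_range_succ']
      push_cast
      rw [show (0 - ((n : ℝ) + 2) / 2) ^ s = (((n : ℝ) + 2) / 2) ^ s by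
        rw [zero_sub, hs.neg_pow]]
      have hshift : ∀ k : ℕ, (k : ℝ) + 1 - (n + 2) / 2 = k - n / 2 := fun k ↦ by ring
      rw [show (n : ℝ) + 2 - (n + 2) / 2 = (n + 2) / 2 by ring]
      simp only [hshift]
      ring
    rw [uniformCentralMoment] at ih ⊢
    rw [div_eq_iff (hpos n)] at ih
    rw [hsum, ih, div_eq_iff (hpos _)]
    push_cast
    linarith [hq n]

lemma uniformCentralMoment_two (n : ℕ) : uniformCentralMoment 2 n = n * (n + 2) / 12 :=
  uniformCentralMoment_eq_of_recurrence even_two (q := fun x ↦ x * (x + 2) / 12)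
    (by norm_num [uniformCentralMoment]) (by norm_num [uniformCentralMoment, sum_range_succ])
    (fun x ↦ by ring) n

lemma uniformCentralMoment_four (n : ℕ) :
    uniformCentralMoment 4 n = n * (n + 2) * (3 * n ^ 2 + 6 * n - 4) / 240 :=
  uniformCentralMoment_eq_of_recurrence (by decide)
    (q := fun x ↦ x * (x + 2) * (3 * x ^ 2 + 6 * x - 4) / 240)
    (by norm_num [uniformCentralMoment]) (by norm_num [uniformCentralMoment, sum_range_succ])
    (fun x ↦ by ring) n

lemma uniformCentralMoment_six (n : ℕ) :
    uniformCentralMoment 6 n = n * (n + 2) * (3 * n ^ 4 + 12 * n ^ 3 - 24 * n + 16) / 1344 :=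
  uniformCentralMoment_eq_of_recurrence (by decide)
    (q := fun x ↦ x * (x + 2) * (3 * x ^ 4 + 12 * x ^ 3 - 24 * x + 16) / 1344)
    (by norm_num [uniformCentralMoment]) (by norm_num [uniformCentralMoment, sum_range_succ])
    (fun x ↦ by ring) n

lemma uniformCentralMoment_eight (n : ℕ) :
    uniformCentralMoment 8 n = n * (n + 2) *
      (5 * n ^ 6 + 30 * n ^ 5 + 20 * n ^ 4 - 120 * n ^ 3 - 16 * n ^ 2 + 288 * n - 192) / 11520 :=
  uniformCentralMoment_eq_of_recurrence (by decide)
    (q := fun x ↦ x * (x + 2) *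
      (5 * x ^ 6 + 30 * x ^ 5 + 20 * x ^ 4 - 120 * x ^ 3 - 16 * x ^ 2 + 288 * x - 192) / 11520)
    (by norm_num [uniformCentralMoment]) (by norm_num [uniformCentralMoment, sum_range_succ])
    (fun x ↦ by ring) n

lemma invCentralMoment_zero_left (n : ℕ) : invCentralMoment 0 n = 1 := by
  simp [invCentralMoment, Fintype.card_perm, Nat.factorial_ne_zero]

lemma invCentralMoment_zero_right {r : ℕ} (hr : r ≠ 0) : invCentralMoment r 0 = 0 := by
  simp [invCentralMoment, numInversions, hr]

lemma invCentralMoment_succ (r n : ℕ) :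
    invCentralMoment r (n + 1) = ∑ i ∈ range (r + 1),
      r.choose i * invCentralMoment i n * uniformCentralMoment (r - i) n := by
  have hshift : ∀ (k : Fin (n + 1)) (σ : Perm (Fin n)),
      (((k + σ.numInversions : ℕ) : ℝ) - (n + 1 : ℕ) * ((n + 1 : ℕ) - 1) / 4) =
        ((σ.numInversions : ℝ) - n * (n - 1) / 4) + ((k : ℕ) - n / 2) := by
    intros
    push_cast
    ring
  rw [invCentralMoment, sum_perm_succ_numInversions
    (fun m : ℕ ↦ ((m : ℝ) - (n + 1 : ℕ) * ((n + 1 : ℕ) - 1) / 4) ^ r)]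
  simp only [hshift]
  set b : Perm (Fin n) → ℝ := fun σ ↦ (σ.numInversions : ℝ) - n * (n - 1) / 4
  set a : ℕ → ℝ := fun k ↦ (k : ℝ) - n / 2
  have hprod : ∀ i, (∑ σ, b σ ^ i) * ∑ k ∈ range (n + 1), a k ^ (r - i) =
      ∑ k : Fin (n + 1), ∑ σ, b σ ^ i * a k ^ (r - i) := fun i ↦ by
    rw [← Fin.sum_univ_eq_sum_range, sum_mul_sum, sum_comm]
  have hfac : ((n + 1).factorial : ℝ) = (n + 1) * n.factorial := by
    push_cast [Nat.factorial_succ]; ring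
  calc (∑ k : Fin (n + 1), ∑ σ, (b σ + a k) ^ r) / ((n + 1).factorial : ℝ)
      = (∑ i ∈ range (r + 1), r.choose i * ((∑ σ, b σ ^ i) * ∑ k ∈ range (n + 1), a k ^ (r - i))) /
          ((n + 1).factorial : ℝ) := by
        simp only [hprod, add_pow, mul_sum]
        rw [sum_comm (s := range (r + 1))]
        refine congrArg (· / _) (sum_congr rfl fun k _ ↦ ?_)
        rw [sum_comm]
        exact sum_congr rfl fun i _ ↦ sum_congr rfl fun σ _ ↦ by ring
    _ = ∑ i ∈ range (r + 1), r.choose i * ((∑ σ, b σ ^ i) / n.factorial) *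
          ((∑ k ∈ range (n + 1), a k ^ (r - i)) / (n + 1)) := by
        rw [sum_div]
        refine sum_congr rfl fun i _ ↦ ?_
        rw [hfac, mul_comm ((n : ℝ) + 1), ← div_div]
        ring

section Recursions

variable (n : ℕ)

local notation "μ" => invCentralMoment
local notation "u" => uniformCentralMoment

lemma invCentralMoment_two_succ : μ 2 (n + 1) = μ 2 n + u 2 n := by
  simp only [invCentralMoment_succ, Nat.reduceAdd, sum_range_succ, range_one, sum_singleton,
    Nat.choose, Nat.cast_one, invCentralMoment_zero_left, mul_one, tsub_zero, one_mul, add_zero,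
    Nat.cast_ofNat, Nat.add_one_sub_one, odd_one, uniformCentralMoment_of_odd, mul_zero, tsub_self,
    uniformCentralMoment_zero_left]
  ring

lemma invCentralMoment_four_succ :
    μ 4 (n + 1) = μ 4 n + 6 * μ 2 n * u 2 n + u 4 n := by
  simp only [invCentralMoment_succ, Nat.reduceAdd, sum_range_succ, range_one, sum_singleton,
    Nat.choose, Nat.cast_one, invCentralMoment_zero_left, mul_one, tsub_zero, one_mul, add_zero,
    Nat.cast_ofNat, Nat.add_one_sub_one, Nat.odd_iff, Nat.reduceMod, uniformCentralMoment_of_odd,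
    mul_zero, Nat.reduceSub, odd_one, tsub_self, uniformCentralMoment_zero_left]
  ring

lemma invCentralMoment_six_succ :
    μ 6 (n + 1) = μ 6 n + 15 * μ 4 n * u 2 n + 15 * μ 2 n * u 4 n + u 6 n := by
  simp only [invCentralMoment_succ, Nat.reduceAdd, sum_range_succ, range_one, sum_singleton,
    Nat.choose, Nat.cast_one, invCentralMoment_zero_left, mul_one, tsub_zero, one_mul, add_zero,
    Nat.cast_ofNat, Nat.add_one_sub_one, Nat.odd_iff, Nat.reduceMod, uniformCentralMoment_of_odd,
    mul_zero, Nat.reduceSub, odd_one, tsub_self, uniformCentralMoment_zero_left]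
  ring

lemma invCentralMoment_eight_succ : μ 8 (n + 1) =
    μ 8 n + 28 * μ 6 n * u 2 n + 70 * μ 4 n * u 4 n + 28 * μ 2 n * u 6 n + u 8 n := by
  simp only [invCentralMoment_succ, Nat.reduceAdd, sum_range_succ, range_one, sum_singleton,
    Nat.choose, Nat.cast_one, invCentralMoment_zero_left, mul_one, tsub_zero, one_mul, add_zero,
    Nat.cast_ofNat, Nat.add_one_sub_one, Nat.odd_iff, Nat.reduceMod, uniformCentralMoment_of_odd,
    mul_zero, Nat.reduceSub, odd_one, tsub_self, uniformCentralMoment_zero_left]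
  ring

end Recursions

lemma invCentralMoment_two (n : ℕ) : invCentralMoment 2 n = n * (n - 1) * (2 * n + 5) / 72 := by
  induction n with
  | zero => simp [invCentralMoment_zero_right]
  | succ n ih =>
    rw [invCentralMoment_two_succ, ih, uniformCentralMoment_two]
    push_cast
    ring

lemma invCentralMoment_four (n : ℕ) : invCentralMoment 4 n =
    n * (n - 1) * (100 * n ^ 4 + 328 * n ^ 3 - 127 * n ^ 2 - 997 * n - 372) / 43200 := by
  induction n with
  | zero => simp [invCentralMoment_zero_right]
  | succ n ih =>
    rw [invCentralMoment_four_succ, ih, invCentralMoment_two, uniformCentralMoment_two,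
      uniformCentralMoment_four]
    push_cast
    ring

lemma invCentralMoment_six (n : ℕ) : invCentralMoment 6 n =
    n * (n - 1) * (9800 * n ^ 7 + 32732 * n ^ 6 - 42010 * n ^ 5 - 230695 * n ^ 4 - 72460 * n ^ 3
      + 400733 * n ^ 2 + 391500 * n + 118080) / 30481920 := by
  induction n with
  | zero => simp [invCentralMoment_zero_right]
  | succ n ih =>
    rw [invCentralMoment_six_succ, ih, invCentralMoment_four, invCentralMoment_two,
      uniformCentralMoment_two, uniformCentralMoment_four, uniformCentralMoment_six]
    push_cast
    ring

lemma invCentralMoment_eight (n : ℕ) : invCentralMoment 8 n =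
    n * (n - 1) * (490000 * n ^ 10 + 1313200 * n ^ 9 - 4396152 * n ^ 8 - 15952512 * n ^ 7
      + 4246473 * n ^ 6 + 62414373 * n ^ 5 + 59298827 * n ^ 4 - 49258153 * n ^ 3
      - 138803688 * n ^ 2 - 113130288 * n - 33747840) / 7838208000 := by
  induction n with
  | zero => simp [invCentralMoment_zero_right]
  | succ n ih =>
    rw [invCentralMoment_eight_succ, ih, invCentralMoment_six, invCentralMoment_four,
      invCentralMoment_two, uniformCentralMoment_two, uniformCentralMoment_four,
      uniformCentralMoment_six, uniformCentralMoment_eight]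
    push_cast
    ring

/-- Null variance of the fourth power of Kendall's tau. -/
theorem stmt11 (n : ℕ) (hn : 2 ≤ n)
    (invp : Perm (Fin n) → ℕ)
    (hinv : ∀ π, invp π = (Finset.univ.filter
      (fun ij : Fin n × Fin n => ij.1 < ij.2 ∧ π ij.2 < π ij.1)).card)
    (τ : Perm (Fin n) → ℝ)
    (hτ : ∀ π, τ π = 1 - 4 * (invp π : ℝ) / ((n : ℝ) * ((n : ℝ) - 1)))
    (M : ℕ → ℝ)
    (hM : ∀ r, M r = (1 / (n.factorial : ℝ)) * ∑ π : Perm (Fin n), (τ π) ^ r) :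
    M 8 - (M 4) ^ 2 = 256 * ((n : ℝ) - 2) *
        (140000 * (n : ℝ) ^ 9 + 617400 * (n : ℝ) ^ 8 - 160764 * (n : ℝ) ^ 7
          - 4827762 * (n : ℝ) ^ 6 - 7764663 * (n : ℝ) ^ 5 + 3028185 * (n : ℝ) ^ 4
          + 23170684 * (n : ℝ) ^ 3 + 31403277 * (n : ℝ) ^ 2 + 20222343 * (n : ℝ)
          + 5273100) /
      (9568125 * (n : ℝ) ^ 7 * ((n : ℝ) - 1) ^ 7) := by
  have hn₂ : (2 : ℝ) ≤ n := by exact_mod_cast hn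
  have hn₀ : (n : ℝ) ≠ 0 := by positivity
  have hn₁ : (n : ℝ) - 1 ≠ 0 := ne_of_gt (by linarith)
  have hτ_centered :
      ∀ π, τ π = -4 / (n * (n - 1)) * ((π.numInversions : ℝ) - n * (n - 1) / 4) := by
    intro π
    rw [hτ, hinv, ← numInversions]
    field_simp
    ring
  have hM_central : ∀ r, M r = (-4 / (n * (n - 1))) ^ r * invCentralMoment r n := by
    intro r
    simp only [hM, hτ_centered, mul_pow, ← mul_sum, invCentralMoment]
    ring
  rw [hM_central, hM_central, invCentralMoment_eight, invCentralMoment_four]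
  field_simp
  ring
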